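/- In region Ω₂, ρ stays above 1: let n ≥ 1 and let (d,ρ) solve d' = -(1/n)d² - (ρ-1), ρ' = -dρ on [0,T) with ρ > 0, and suppose I := ρ^{-2/n}(d² - nF(ρ)) satisfies I < 0 and ρ(0) > 1. Then ρ(t) > 1 for all t ∈ [0,T), and moreover ρ(t) - 1 ≥ -I/2. -/

import Mathlib

open Real intervalIntegral

noncomputable def F (n : ℕ) (ρ : ℝ) : ℝ :=
  (2/(n : ℝ)) * ρ ^ ((2 : ℝ)/n) * ∫ r in (1 : ℝ)..ρ, (1 - 1/r) * r ^ (-(2 : ℝ)/n)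

/-!
Along solutions the quantity `ρ^(-2/n) d² - 2 ∫₁^ρ (1 - 1/r) r^(-2/n) dr`, which equals
`ρ^(-2/n) (d² - n F(ρ))`, is conserved, so it stays equal to `I < 0`. At a time where `ρ = 1`
it would equal `d² ≥ 0`; hence `ρ` never reaches `1`. For `ρ ≥ 1` the integral is at most
`ρ - 1`, since its integrand lies in `[0, 1]`, and this gives `I ≥ -2 (ρ - 1)`.
-/

open Set

noncomputable def potential (p u : ℝ) : ℝ :=
  ∫ r in (1 : ℝ)..u, (1 - 1/r) * r ^ p

section Potential

variable {p u : ℝ}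

lemma continuousOn_potential_integrand (p : ℝ) :
    ContinuousOn (fun r : ℝ => (1 - 1/r) * r ^ p) (Ioi 0) := fun _ hr =>
  ((continuousAt_const.sub (continuousAt_const.div continuousAt_id (ne_of_gt hr))).mul
    (continuousAt_rpow_const _ _ (Or.inl (ne_of_gt hr)))).continuousWithinAt

lemma hasDerivAt_potential (hu : 0 < u) :
    HasDerivAt (potential p) ((1 - 1/u) * u ^ p) u := by
  have hcont := continuousOn_potential_integrand p
  have hint : IntervalIntegrable (fun r : ℝ => (1 - 1/r) * r ^ p) MeasureTheory.volume 1 u :=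
    (hcont.mono fun r hr => lt_of_lt_of_le (lt_min one_pos hu) hr.1).intervalIntegrable
  exact integral_hasDerivAt_right hint (hcont.stronglyMeasurableAtFilter isOpen_Ioi _ hu)
    (hcont.continuousAt (Ioi_mem_nhds hu))

@[simp]
lemma potential_one : potential p 1 = 0 := integral_same

lemma potential_le_sub_one (hp : p ≤ 0) (hu : 1 ≤ u) : potential p u ≤ u - 1 := by
  have hbound : ∀ r ∈ Icc (1 : ℝ) u, (1 - 1/r) * r ^ p ≤ 1 := fun r hr => by
    have hr0 : 0 < r := one_pos.trans_le hr.1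
    have h1 : 1 - 1/r ≤ 1 := sub_le_self _ (by positivity)
    exact mul_le_one₀ h1 (rpow_nonneg hr0.le _) (rpow_le_one_of_one_le_of_nonpos hr.1 hp)
  calc potential p u ≤ ∫ _ in (1 : ℝ)..u, (1 : ℝ) :=
        integral_mono_on hu
          ((continuousOn_potential_integrand p).mono
            fun r hr => one_pos.trans_le (uIcc_of_le hu ▸ hr).1).intervalIntegrable
          intervalIntegrable_const hbound
    _ = u - 1 := by simp

end Potential

noncomputable def firstIntegral (n : ℕ) (d ρ : ℝ) : ℝ :=
  ρ ^ (-(2 : ℝ)/n) * d^2 - 2 * potential (-(2 : ℝ)/n) ρ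

section FirstIntegral

variable {n : ℕ}

lemma firstIntegral_eq_rpow_mul_sub_F (hn : n ≠ 0) {d ρ : ℝ} (hρ : 0 < ρ) :
    firstIntegral n d ρ = ρ ^ (-(2 : ℝ)/n) * (d^2 - n * F n ρ) := by
  have hinv : ρ ^ (-(2 : ℝ)/n) * ρ ^ ((2 : ℝ)/n) = 1 := by
    rw [← rpow_add hρ, neg_div, neg_add_cancel, rpow_zero]
  have hnF : n * F n ρ = 2 * ρ ^ ((2 : ℝ)/n) * potential (-(2 : ℝ)/n) ρ := by
    have hn' : (n : ℝ) ≠ 0 := Nat.cast_ne_zero.2 hn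
    rw [F, ← potential]
    field_simp
  rw [firstIntegral, hnF]
  linear_combination (2 * potential (-(2 : ℝ)/n) ρ) * hinv

@[simp]
lemma firstIntegral_one (d : ℝ) : firstIntegral n d 1 = d^2 := by
  simp [firstIntegral]

lemma neg_two_mul_sub_one_le_firstIntegral (d : ℝ) {ρ : ℝ} (hρ : 1 ≤ ρ) :
    -2 * (ρ - 1) ≤ firstIntegral n d ρ := by
  have hpot := potential_le_sub_one
    (div_nonpos_of_nonpos_of_nonneg (by norm_num : -(2 : ℝ) ≤ 0) n.cast_nonneg) hρ
  have hkin : 0 ≤ ρ ^ (-(2 : ℝ)/n) * d^2 := by positivity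
  rw [firstIntegral]
  linarith

lemma hasDerivAt_firstIntegral {d ρ : ℝ → ℝ} {t : ℝ} (hρt : 0 < ρ t)
    (hd : HasDerivAt d (-(1/(n : ℝ)) * (d t)^2 - (ρ t - 1)) t)
    (hρ : HasDerivAt ρ (-(d t) * ρ t) t) :
    HasDerivAt (fun s => firstIntegral n (d s) (ρ s)) 0 t := by
  set a : ℝ := -(2 : ℝ)/n
  have hpow : ρ t ^ (a - 1) * ρ t = ρ t ^ a := by
    rw [← rpow_add_one hρt.ne', sub_add_cancel]
  have hderiv := ((hρ.rpow_const (p := a) (Or.inl hρt.ne')).mul (hd.pow 2)).sub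
    (((hasDerivAt_potential (p := a) hρt).comp t hρ).const_mul 2)
  refine hderiv.congr_deriv ?_
  -- true also for `n = 0`, where `2/n = 0`
  have ha : a = -(2 * (1/(n : ℝ))) := by ring
  have hρ1 : (1 - 1/ρ t) * ρ t = ρ t - 1 := by field_simp
  simp only [Pi.pow_apply, Nat.cast_ofNat, pow_one, Nat.add_one_sub_one]
  linear_combination (-a * d t ^ 3) * hpow + (2 * d t * ρ t ^ a) * hρ1 + (-(d t) ^ 3 * ρ t ^ a) * ha

lemma firstIntegral_eq_of_mem_Ico {a b : ℝ} {d ρ : ℝ → ℝ} (hρpos : ∀ t ∈ Ico a b, 0 < ρ t)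
    (hd : ∀ t ∈ Ico a b, HasDerivAt d (-(1/(n : ℝ)) * (d t)^2 - (ρ t - 1)) t)
    (hρ : ∀ t ∈ Ico a b, HasDerivAt ρ (-(d t) * ρ t) t) {t : ℝ} (ht : t ∈ Ico a b) :
    firstIntegral n (d t) (ρ t) = firstIntegral n (d a) (ρ a) := by
  have hsub : Icc a t ⊆ Ico a b := fun s hs => ⟨hs.1, hs.2.trans_lt ht.2⟩
  have hderiv : ∀ s ∈ Ico a b, HasDerivAt (fun s => firstIntegral n (d s) (ρ s)) 0 s :=
    fun s hs => hasDerivAt_firstIntegral (hρpos s hs) (hd s hs) (hρ s hs)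
  exact constant_of_has_deriv_right_zero
    (fun s hs => (hderiv s (hsub hs)).continuousAt.continuousWithinAt)
    (fun s hs => (hderiv s (hsub (Ico_subset_Icc_self hs))).hasDerivWithinAt) t ⟨ht.1, le_rfl⟩

lemma one_lt_of_firstIntegral_eq_neg {a b I : ℝ} {d ρ : ℝ → ℝ} (hab : a ≤ b)
    (hρc : ContinuousOn ρ (Icc a b)) (hρa : 1 < ρ a)
    (hE : ∀ s ∈ Icc a b, firstIntegral n (d s) (ρ s) = I) (hI : I < 0) : 1 < ρ b := by
  by_contra! hb
  obtain ⟨s, hs, hρs⟩ := intermediate_value_Icc' hab hρc ⟨hb, hρa.le⟩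
  have hEs := hE s hs
  rw [hρs, firstIntegral_one] at hEs
  exact hI.not_ge (hEs ▸ sq_nonneg (d s))

end FirstIntegral

theorem region_Omega2_rho_above_one_general (n : ℕ) (hn : 1 ≤ n) (T : ℝ) (d ρ : ℝ → ℝ)
    (hρpos : ∀ t ∈ Set.Ico 0 T, 0 < ρ t)
    (hd : ∀ t ∈ Set.Ico 0 T, HasDerivAt d (-(1/(n : ℝ)) * (d t)^2 - (ρ t - 1)) t)
    (hρ : ∀ t ∈ Set.Ico 0 T, HasDerivAt ρ (-(d t) * ρ t) t)
    (I : ℝ) (hI : I = (ρ 0) ^ (-(2 : ℝ)/n) * ((d 0)^2 - n * F n (ρ 0)))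
    (hIneg : I < 0) (hρ0 : 1 < ρ 0) :
    ∀ t ∈ Set.Ico 0 T, 1 < ρ t ∧ -I/2 ≤ ρ t - 1 := by
  intro t ht
  have hsub : Icc 0 t ⊆ Ico 0 T := fun s hs => ⟨hs.1, hs.2.trans_lt ht.2⟩
  have hE : ∀ s ∈ Icc 0 t, firstIntegral n (d s) (ρ s) = I := fun s hs => by
    rw [firstIntegral_eq_of_mem_Ico hρpos hd hρ (hsub hs), hI,
      firstIntegral_eq_rpow_mul_sub_F (by omega) (hρpos 0 (hsub (left_mem_Icc.2 ht.1)))]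
  have hone : 1 < ρ t := one_lt_of_firstIntegral_eq_neg ht.1
    (fun s hs => (hρ s (hsub hs)).continuousAt.continuousWithinAt) hρ0 hE hIneg
  have hlower := neg_two_mul_sub_one_le_firstIntegral (n := n) (d t) hone.le
  exact ⟨hone, by linarith [hE t (right_mem_Icc.2 ht.1)]⟩

theorem region_Omega2_rho_above_one (n : ℕ) (hn : 1 ≤ n) (T : ℝ) (d ρ : ℝ → ℝ)
    (hρpos : ∀ t ∈ Set.Ico 0 T, 0 < ρ t)
    (hd : ∀ t ∈ Set.Ico 0 T, HasDerivAt d (-(1/(n : ℝ)) * (d t)^2 - (ρ t - 1)) t)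
    (hρ : ∀ t ∈ Set.Ico 0 T, HasDerivAt ρ (-(d t) * ρ t) t)
    (h0 : (0 : ℝ) ∈ Set.Ico 0 T)
    (I : ℝ) (hI : I = (ρ 0) ^ (-(2 : ℝ)/n) * ((d 0)^2 - n * F n (ρ 0)))
    (hIneg : I < 0) (hρ0 : 1 < ρ 0) :
    ∀ t ∈ Set.Ico 0 T, 1 < ρ t ∧ -I/2 ≤ ρ t - 1 :=
  region_Omega2_rho_above_one_general n hn T d ρ hρpos hd hρ I hI hIneg hρ0
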